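/- arXiv:0808.2907 — 3 statements merged into one kernel-verified Lean document; each statement's English description precedes it below -/
import Mathlib

section
/- Let p : ℕ → ℝ be nonnegative with p j ≤ c * j^(-γ) for 1 ≤ j ≤ J, where γ > 3 and J ≤ A * n^(1/γ). Then there is a constant C (depending on c, γ, A) with ∑_{j=1}^{J} j^4 * p j ≤ C * n^(max 0 ((5-γ)/γ)) * (log n + 1). Consequently n^(-1) * ∑_{j=1}^{J} j^4 * p j ≤ C * n^(-1 + max 0 ((5-γ)/γ)) * (log n + 1), which tends to 0; indeed for γ > 3 one has -1 + max(0, (5-γ)/γ) < -1/3, so n^(-1) ∑ j^4 p j = o(n^(-1/3)). -/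
/-!
Bound each term by `j ^ 4 * p j ≤ c * j ^ (5 - γ) / j`. Since `j ≤ J ≤ A * n ^ (1 / γ)`,
the factor `j ^ (5 - γ)` is at most `A ^ (5 - γ) * n ^ ((5 - γ) / γ)` if `γ ≤ 5` and at most
`1` if `γ > 5`, and what remains is the harmonic sum `∑ 1 / j ≤ log J + 1 = O(log n)`.
-/

open Finset Real

theorem neg_one_add_max_zero_div_lt {γ : ℝ} (hγ : 3 < γ) :
    -1 + max 0 ((5 - γ) / γ) < -(1 / 3) := by
  have h : (5 - γ) / γ < 2 / 3 := by
    rw [div_lt_iff₀ (by linarith)]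
    linarith
  have := max_lt (show (0 : ℝ) < 2 / 3 by norm_num) h
  linarith

theorem sum_Icc_inv_le_log_add_one (J : ℕ) : ∑ j ∈ Icc 1 J, (j : ℝ)⁻¹ ≤ log J + 1 := by
  have h := harmonic_le_one_add_log J
  rw [harmonic_eq_sum_Icc] at h
  push_cast at h
  linarith

/-- Moments of weights with a power-law tail: the `j`-th term is at most `c * M / j`. -/
theorem sum_pow_mul_le_of_le_rpow_neg {c γ M : ℝ} {k J : ℕ} {p : ℕ → ℝ} (hc : 0 ≤ c)
    (hJ : 1 ≤ J)
    (hp : ∀ j ∈ Icc 1 J, p j ≤ c * (j : ℝ) ^ (-γ))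
    (hM : ∀ j ∈ Icc 1 J, (j : ℝ) ^ ((k : ℝ) + 1 - γ) ≤ M) :
    ∑ j ∈ Icc 1 J, (j : ℝ) ^ k * p j ≤ c * M * (log J + 1) := by
  have hterm : ∀ j ∈ Icc 1 J, (j : ℝ) ^ k * p j ≤ c * M * (j : ℝ)⁻¹ := by
    intro j hj
    have hj0 : (0 : ℝ) < j := by
      have := (mem_Icc.mp hj).1
      positivity
    have hsplit :
        (j : ℝ) ^ k * (j : ℝ) ^ (-γ) = (j : ℝ) ^ ((k : ℝ) + 1 - γ) * (j : ℝ)⁻¹ := by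
      rw [← rpow_natCast, ← rpow_neg_one, ← rpow_add hj0, ← rpow_add hj0]
      ring_nf
    calc (j : ℝ) ^ k * p j ≤ (j : ℝ) ^ k * (c * (j : ℝ) ^ (-γ)) := by gcongr; exact hp j hj
      _ = c * ((j : ℝ) ^ ((k : ℝ) + 1 - γ) * (j : ℝ)⁻¹) := by rw [← hsplit]; ring
      _ ≤ c * (M * (j : ℝ)⁻¹) := by gcongr; exact hM j hj
      _ = c * M * (j : ℝ)⁻¹ := by ring
  calc ∑ j ∈ Icc 1 J, (j : ℝ) ^ k * p j
      ≤ ∑ j ∈ Icc 1 J, c * M * (j : ℝ)⁻¹ := sum_le_sum hterm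
    _ = c * M * ∑ j ∈ Icc 1 J, (j : ℝ)⁻¹ := by rw [mul_sum]
    _ ≤ c * M * (log J + 1) := by
      have hM0 : 0 ≤ M := (rpow_nonneg (Nat.cast_nonneg _) _).trans (hM 1 (by simpa using hJ))
      gcongr
      exact sum_Icc_inv_le_log_add_one J

theorem rpow_le_max_one_rpow_mul_rpow_of_le_mul_rpow {x A n γ s : ℝ} (hx : 1 ≤ x)
    (hxn : x ≤ A * n ^ (1 / γ)) (hA : 0 < A) (hn : 1 ≤ n) :
    x ^ s ≤ max 1 (A ^ s) * n ^ max 0 (s / γ) := by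
  have hn0 : 0 ≤ n := by linarith
  have hone : 1 ≤ max 1 (A ^ s) * n ^ max 0 (s / γ) :=
    one_le_mul_of_one_le_of_one_le (le_max_left _ _) (one_le_rpow hn (le_max_left _ _))
  rcases le_or_gt 0 s with hs | hs
  · calc x ^ s ≤ (A * n ^ (1 / γ)) ^ s := rpow_le_rpow (by linarith) hxn hs
      _ = A ^ s * n ^ (s / γ) := by
        rw [mul_rpow hA.le (rpow_nonneg hn0 _), ← rpow_mul hn0, one_div_mul_eq_div]
      _ ≤ max 1 (A ^ s) * n ^ max 0 (s / γ) := by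
        gcongr
        · exact le_max_right _ _
        · exact le_max_right _ _
  · exact (rpow_le_one_of_one_le_of_nonpos hx hs.le).trans hone

theorem log_add_one_le_of_le_mul_rpow {x A n t : ℝ} (hx : 0 < x) (hxn : x ≤ A * n ^ t)
    (hA : 0 < A) (hn : 1 ≤ n) (ht : t ≤ 1) :
    log x + 1 ≤ (1 + |log A|) * (log n + 1) := by
  have hlogn : 0 ≤ log n := log_nonneg hn
  have hlog : log x ≤ log A + t * log n := by
    calc log x ≤ log (A * n ^ t) := log_le_log hx hxn
      _ = log A + t * log n := by
        rw [log_mul hA.ne' (rpow_pos_of_pos (by linarith) _).ne', log_rpow (by linarith)]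
  have : t * log n ≤ log n := by nlinarith
  nlinarith [le_abs_self (log A), abs_nonneg (log A)]

theorem fourth_moment_subpower (c γ A : ℝ) (hc : 0 < c) (hγ : 3 < γ) (hA : 0 < A) :
    (-1 + max 0 ((5 - γ) / γ) < -(1 / 3)) ∧
    ∃ C > 0, ∀ (n J : ℕ) (p : ℕ → ℝ), 2 ≤ n → 1 ≤ J →
      (∀ j, 0 ≤ p j) →
      (∀ j : ℕ, 1 ≤ j → j ≤ J → p j ≤ c * (j : ℝ) ^ (-γ)) →
      (J : ℝ) ≤ A * (n : ℝ) ^ (1 / γ) →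
      (∑ j ∈ Finset.Icc 1 J, (j : ℝ) ^ 4 * p j ≤
          C * (n : ℝ) ^ (max 0 ((5 - γ) / γ)) * (Real.log n + 1)) ∧
        (n : ℝ)⁻¹ * ∑ j ∈ Finset.Icc 1 J, (j : ℝ) ^ 4 * p j ≤
          C * (n : ℝ) ^ (-1 + max 0 ((5 - γ) / γ)) * (Real.log n + 1) := by
  refine ⟨neg_one_add_max_zero_div_lt hγ, c * max 1 (A ^ (5 - γ)) * (1 + |log A|),
    by positivity, ?_⟩
  intro n J p hn hJ _ hp hJn
  have hn1 : (1 : ℝ) ≤ n := by exact_mod_cast (by omega : 1 ≤ n)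
  have hpow : ∀ j ∈ Icc 1 J, (j : ℝ) ^ (((4 : ℕ) : ℝ) + 1 - γ) ≤
      max 1 (A ^ (5 - γ)) * (n : ℝ) ^ max 0 ((5 - γ) / γ) := by
    intro j hj
    obtain ⟨hj1, hjJ⟩ := mem_Icc.mp hj
    rw [show ((4 : ℕ) : ℝ) + 1 - γ = 5 - γ by norm_num]
    exact rpow_le_max_one_rpow_mul_rpow_of_le_mul_rpow (by exact_mod_cast hj1)
      ((Nat.cast_le.mpr hjJ).trans hJn) hA hn1
  have hlog := log_add_one_le_of_le_mul_rpow (by positivity) hJn hA hn1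
    (by rw [div_le_one (by linarith)]; linarith)
  have hmain := (sum_pow_mul_le_of_le_rpow_neg hc.le hJ
    (fun j hj ↦ hp j (mem_Icc.mp hj).1 (mem_Icc.mp hj).2) hpow).trans
    (mul_le_mul_of_nonneg_left hlog (by positivity))
  refine ⟨hmain.trans_eq (by ring), ?_⟩
  rw [rpow_add (by linarith), rpow_neg_one]
  calc (n : ℝ)⁻¹ * ∑ j ∈ Icc 1 J, (j : ℝ) ^ 4 * p j
      ≤ (n : ℝ)⁻¹ * (c * (max 1 (A ^ (5 - γ)) * (n : ℝ) ^ max 0 ((5 - γ) / γ)) *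
        ((1 + |log A|) * (log n + 1))) := by gcongr
    _ = _ := by ring
end

section
/- For positive integers j, d, n and integer t with 0 ≤ t and 2t + 1 + j ≤ n*d, the product ∏_{τ=0}^{t-1} (1 - j/(n*d - 2τ - 1)) satisfies the two-sided bound: (1 - 2t/(n*d))^(j/2) * exp(-C*j*(t+1)/(n*d - 2t)) ≤ ∏_{τ=0}^{t-1} (1 - j/(n*d - 2τ - 1)) ≤ (1 - 2t/(n*d))^(j/2) * exp(C*j*(t+1)/(n*d - 2t)) for some absolute constant C, provided j ≤ (n*d - 2t)/2. -/
/-!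
Take logarithms. The base telescopes, `1 - 2t/m = ∏_{τ<t} (1 - 2/(m - 2τ))`, so with
`a = m - 2τ - 1` it suffices to compare `log (1 - j/a)` with `(j/2) log (1 - 2/(a+1))` factor by
factor. Their difference is `O(j/a)`: the linear terms `-j/a` and `-j/(a+1)` differ by `j/a²`, and
the quadratic remainders of `log (1 - x)` are `O(j²/a²) = O(j/a)` since `2j ≤ a`. As `a > m - 2t`,
the `t` errors add up to `O(j t/(m - 2t))`.
-/

open Finset Real

lemma abs_log_one_sub_add_le {x : ℝ} (hx : |x| ≤ 1 / 2) : |log (1 - x) + x| ≤ 2 * x ^ 2 := by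
  have h := abs_log_sub_add_sum_range_le (hx.trans_lt (by norm_num)) 1
  simp only [sum_range_one, zero_add, Nat.cast_zero, pow_one, div_one] at h
  calc |log (1 - x) + x| = |x + log (1 - x)| := by rw [add_comm]
    _ ≤ |x| ^ 2 / (1 - |x|) := h
    _ ≤ 2 * x ^ 2 := by
      rw [div_le_iff₀ (by linarith), sq_abs]
      nlinarith [sq_nonneg x]

lemma abs_log_one_sub_div_sub_half_mul_log_le {a j : ℝ} (hj : 0 ≤ j) (hja : 2 * j ≤ a)
    (ha : 3 ≤ a) : |log (1 - j / a) - j / 2 * log (1 - 2 / (a + 1))| ≤ 3 * j / a := by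
  have ha0 : 0 < a := by linarith
  have hx : |j / a| ≤ 1 / 2 := by
    rw [abs_of_nonneg (by positivity), div_le_iff₀ ha0]; linarith
  have hy : |2 / (a + 1)| ≤ 1 / 2 := by
    rw [abs_of_nonneg (by positivity), div_le_iff₀ (by linarith)]; linarith
  have hsplit : log (1 - j / a) - j / 2 * log (1 - 2 / (a + 1)) =
      (log (1 - j / a) + j / a) - j / 2 * (log (1 - 2 / (a + 1)) + 2 / (a + 1))
        - j / (a * (a + 1)) := by
    field_simp
    ring
  have hA := abs_le.mp (abs_log_one_sub_add_le hx)
  have hB : |j / 2 * (log (1 - 2 / (a + 1)) + 2 / (a + 1))| ≤ j / 2 * (2 * (2 / (a + 1)) ^ 2) := by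
    rw [abs_mul, abs_of_nonneg (by positivity : 0 ≤ j / 2)]
    gcongr
    exact abs_log_one_sub_add_le hy
  have hB' := abs_le.mp hB
  have hA_le : 2 * (j / a) ^ 2 ≤ j / a := by
    rw [div_pow, ← mul_div_assoc, div_le_div_iff₀ (by positivity) ha0]
    nlinarith [mul_le_mul_of_nonneg_left hja (mul_nonneg hj ha0.le)]
  have hB_le : j / 2 * (2 * (2 / (a + 1)) ^ 2) ≤ j / a := by
    rw [show j / 2 * (2 * (2 / (a + 1)) ^ 2) = 4 * j / (a + 1) ^ 2 by rw [div_pow]; ring,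
      div_le_div_iff₀ (by positivity) ha0]
    nlinarith [mul_le_mul_of_nonneg_left ha hj]
  have hlin_le : j / (a * (a + 1)) ≤ j / a := div_le_div_of_nonneg_left hj ha0 (by nlinarith)
  have hlin_nonneg : 0 ≤ j / (a * (a + 1)) := by positivity
  rw [hsplit, abs_le]
  constructor <;> linarith [show 3 * j / a = j / a + j / a + j / a by ring]

lemma prod_range_one_sub_two_div {m : ℝ} {t : ℕ} (ht : 2 * t < m) :
    ∏ τ ∈ range t, (1 - 2 / (m - 2 * τ)) = 1 - 2 * t / m := by
  induction t with
  | zero => simp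
  | succ t ih =>
    push_cast at ht
    have hm : m ≠ 0 := by linarith [(t.cast_nonneg : (0 : ℝ) ≤ t)]
    have hmt : m - 2 * t ≠ 0 := by linarith
    rw [prod_range_succ, ih (by linarith)]
    field_simp
    push_cast
    ring

lemma abs_log_prod_sub_log_prod_le {ι : Type*} (s : Finset ι) {f g : ι → ℝ}
    (hf : ∀ i ∈ s, f i ≠ 0) (hg : ∀ i ∈ s, g i ≠ 0) :
    |log (∏ i ∈ s, f i) - log (∏ i ∈ s, g i)| ≤ ∑ i ∈ s, |log (f i) - log (g i)| := by
  rw [log_prod hf, log_prod hg, ← sum_sub_distrib]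
  exact abs_sum_le_sum_abs _ _

lemma mul_exp_neg_le_and_le_mul_exp_of_abs_log_sub_le {x y δ : ℝ} (hx : 0 < x) (hy : 0 < y)
    (h : |log x - log y| ≤ δ) : y * exp (-δ) ≤ x ∧ x ≤ y * exp δ := by
  obtain ⟨hlo, hhi⟩ := abs_le.mp h
  rw [← exp_log hx, ← exp_log hy, ← exp_add, ← exp_add, exp_le_exp, exp_le_exp]
  constructor <;> linarith

section Exploration

variable {m j : ℝ} {t : ℕ}

lemma sub_two_mul_add_two_le_of_mem_range {τ : ℕ} (hτ : τ ∈ range t) :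
    m - 2 * t + 2 ≤ m - 2 * τ := by
  have : (τ : ℝ) + 1 ≤ t := by exact_mod_cast mem_range.mp hτ
  linarith

lemma one_sub_div_sub_two_mul_sub_one_pos (hj : 0 ≤ j) (hm : 2 * t + 1 + j ≤ m) {τ : ℕ}
    (hτ : τ ∈ range t) : 0 < 1 - j / (m - 2 * τ - 1) := by
  have := sub_two_mul_add_two_le_of_mem_range (m := m) hτ
  rw [sub_pos, div_lt_one (by linarith)]
  linarith

lemma abs_log_prod_sub_log_rpow_le (hj : 1 ≤ j) (hm : 2 * t + 1 + j ≤ m)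
    (hjm : j ≤ (m - 2 * t) / 2) :
    |log (∏ τ ∈ range t, (1 - j / (m - 2 * τ - 1))) - log ((1 - 2 * t / m) ^ (j / 2))| ≤
      3 * j * (t + 1) / (m - 2 * t) := by
  have hg : ∀ τ ∈ range t, 0 < 1 - 2 / (m - 2 * τ) := fun τ hτ => by
    have := sub_two_mul_add_two_le_of_mem_range (m := m) hτ
    rw [sub_pos, div_lt_one (by linarith)]
    linarith
  rw [← prod_range_one_sub_two_div (by linarith), ← finsetProd_rpow _ _ fun τ hτ => (hg τ hτ).le]
  have hterm : ∀ τ ∈ range t, |log (1 - j / (m - 2 * τ - 1)) -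
      log ((1 - 2 / (m - 2 * τ)) ^ (j / 2))| ≤ 3 * j / (m - 2 * t) := fun τ hτ => by
    have := sub_two_mul_add_two_le_of_mem_range (m := m) hτ
    have key := abs_log_one_sub_div_sub_half_mul_log_le (a := m - 2 * τ - 1) (j := j)
      (by linarith) (by linarith) (by linarith)
    rw [sub_add_cancel, ← log_rpow (hg τ hτ)] at key
    exact key.trans (div_le_div_of_nonneg_left (by linarith) (by linarith) (by linarith))
  calc _ ≤ ∑ τ ∈ range t, 3 * j / (m - 2 * t) :=
        (abs_log_prod_sub_log_prod_le _
          (fun τ hτ => (one_sub_div_sub_two_mul_sub_one_pos (by linarith) hm hτ).ne')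
          (fun τ hτ => (rpow_pos_of_pos (hg τ hτ) _).ne')).trans (sum_le_sum hterm)
    _ = 3 * j * t / (m - 2 * t) := by rw [sum_const, card_range, nsmul_eq_mul]; ring
    _ ≤ 3 * j * (t + 1) / (m - 2 * t) :=
        div_le_div_of_nonneg_right (by nlinarith) (by linarith)

end Exploration

theorem product_factor_estimate :
    ∃ C > 0, ∀ (j d n t : ℕ), 0 < j → 0 < d → 0 < n →
      2 * t + 1 + j ≤ n * d → (j : ℝ) ≤ ((n : ℝ) * d - 2 * t) / 2 →
      (1 - 2 * (t : ℝ) / ((n : ℝ) * d)) ^ ((j : ℝ) / 2) *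
          Real.exp (-C * j * (t + 1) / ((n : ℝ) * d - 2 * t)) ≤
        (∏ τ ∈ Finset.range t, (1 - (j : ℝ) / ((n : ℝ) * d - 2 * τ - 1))) ∧
      (∏ τ ∈ Finset.range t, (1 - (j : ℝ) / ((n : ℝ) * d - 2 * τ - 1))) ≤
        (1 - 2 * (t : ℝ) / ((n : ℝ) * d)) ^ ((j : ℝ) / 2) *
          Real.exp (C * j * (t + 1) / ((n : ℝ) * d - 2 * t)) := by
  refine ⟨3, by norm_num, fun j d n t hj _ _ hcard hjm => ?_⟩
  have hj : (1 : ℝ) ≤ j := by exact_mod_cast hj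
  have hm : 2 * t + 1 + (j : ℝ) ≤ n * d := by exact_mod_cast hcard
  have hbase : 0 < 1 - 2 * (t : ℝ) / (n * d) := by
    rw [sub_pos, div_lt_one (by linarith)]
    linarith
  obtain ⟨hlo, hhi⟩ := mul_exp_neg_le_and_le_mul_exp_of_abs_log_sub_le
    (prod_pos fun τ hτ => one_sub_div_sub_two_mul_sub_one_pos (by linarith) hm hτ)
    (rpow_pos_of_pos hbase _) (abs_log_prod_sub_log_rpow_le hj hm hjm)
  refine ⟨?_, hhi⟩
  convert hlo using 3
  ring
end

section
/- Let p : ℕ → ℝ be nonnegative, supported on {1, …, J} with J ≤ A*n^(1/γ), γ > 3, satisfying p j ≤ c*j^(-γ), and let d = ∑_j j p j ≥ δ > 0. Suppose ∑_j j(j-2) p j ≤ -a*d for some a > 0 (subcriticality). Then for all sufficiently large n and all t ≤ n^α with α < 1 - 1/γ: n * ∑_{j≤J} j(j-2) p j * (1 - 2t/(n d))^(j/2) ≤ n * ∑_{j≤J} j(j-2) p j + C * n^(α + 1/γ) * (log n + 1) for a constant C depending only on c, γ, A, δ. -/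
/-!
For `0 ≤ x ≤ 1` the factor `x ^ (j / 2)` is at most `1`, so it can only decrease the terms with
`j ≥ 2`, where `j (j - 2) p j ≥ 0`. The only negative term is `j = 1`, and there
`p 1 (1 - √x) ≤ p 1 (1 - x) ≤ (1 - x) d`. With `1 - x = 2t / (n d)` the whole error is at most `2t`,
which is `O(n ^ α)`. The condition `α < 1` guarantees `2t ≤ n d` for large `n`, i.e. `x ≥ 0`.
-/

open Filter

lemma mul_sub_two_mul_rpow_half_le (j : ℕ) {w x : ℝ} (hw : 0 ≤ w) (hx₀ : 0 ≤ x) (hx₁ : x ≤ 1) :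
    (j : ℝ) * ((j : ℝ) - 2) * w * x ^ ((j : ℝ) / 2) ≤
      (j : ℝ) * ((j : ℝ) - 2) * w + (1 - x) * ((j : ℝ) * w) := by
  rcases Nat.lt_or_ge j 2 with hj | hj
  · interval_cases j
    · simp
    · have hx : x ≤ x ^ ((1 : ℝ) / 2) := Real.self_le_rpow_of_le_one hx₀ hx₁ (by norm_num)
      push_cast
      nlinarith
  · have hj' : (2 : ℝ) ≤ j := by exact_mod_cast hj
    have hcoef : 0 ≤ (j : ℝ) * ((j : ℝ) - 2) * w := by positivity
    have hpow : x ^ ((j : ℝ) / 2) ≤ 1 := Real.rpow_le_one hx₀ hx₁ (by positivity)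
    have herr : 0 ≤ (1 - x) * ((j : ℝ) * w) := by
      have : 0 ≤ 1 - x := by linarith
      positivity
    nlinarith [mul_le_of_le_one_right hcoef hpow]

lemma sum_mul_sub_two_mul_rpow_half_le (s : Finset ℕ) {w : ℕ → ℝ} (hw : ∀ j, 0 ≤ w j) {x : ℝ}
    (hx₀ : 0 ≤ x) (hx₁ : x ≤ 1) :
    ∑ j ∈ s, (j : ℝ) * ((j : ℝ) - 2) * w j * x ^ ((j : ℝ) / 2) ≤
      ∑ j ∈ s, (j : ℝ) * ((j : ℝ) - 2) * w j + (1 - x) * ∑ j ∈ s, (j : ℝ) * w j := by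
  rw [Finset.mul_sum, ← Finset.sum_add_distrib]
  exact Finset.sum_le_sum fun j _ => mul_sub_two_mul_rpow_half_le j (hw j) hx₀ hx₁

lemma eventually_two_mul_rpow_le_mul {α δ : ℝ} (hα : α < 1) (hδ : 0 < δ) :
    ∀ᶠ n : ℕ in atTop, 2 * (n : ℝ) ^ α ≤ n * δ := by
  have hgrowth := ((tendsto_rpow_atTop (sub_pos.2 hα)).comp tendsto_natCast_atTop_atTop).eventually
    (eventually_ge_atTop (2 / δ))
  filter_upwards [hgrowth, eventually_ge_atTop 1] with n hn hn₁
  have hn₀ : (0 : ℝ) < n := by exact_mod_cast hn₁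
  have hsplit : (n : ℝ) = n ^ α * n ^ (1 - α) := by
    rw [← Real.rpow_add hn₀, add_sub_cancel, Real.rpow_one]
  calc 2 * (n : ℝ) ^ α = n ^ α * (2 / δ) * δ := by field_simp
    _ ≤ n ^ α * n ^ (1 - α) * δ := by gcongr; exact hn
    _ = n * δ := by rw [← hsplit]

lemma rpow_le_rpow_add_mul_log_add_one {n : ℕ} (hn : 1 ≤ n) {α β : ℝ} (hβ : 0 ≤ β) :
    (n : ℝ) ^ α ≤ (n : ℝ) ^ (α + β) * (Real.log n + 1) := by
  have hn' : (1 : ℝ) ≤ n := by exact_mod_cast hn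
  calc (n : ℝ) ^ α ≤ (n : ℝ) ^ (α + β) := Real.rpow_le_rpow_of_exponent_le hn' (by linarith)
    _ ≤ (n : ℝ) ^ (α + β) * (Real.log n + 1) :=
      le_mul_of_one_le_right (by positivity) (by linarith [Real.log_nonneg hn'])

theorem drift_sum_estimate_general (c γ A δ a α : ℝ) (hγ : 3 < γ)
    (hδ : 0 < δ) (hα' : α < 1 - 1 / γ) :
    ∃ C > 0, ∃ N : ℕ, ∀ n : ℕ, N ≤ n → ∀ (J : ℕ) (p : ℕ → ℝ) (t : ℕ),
      (∀ j, 0 ≤ p j) →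
      (∀ j : ℕ, 1 ≤ j → j ≤ J → p j ≤ c * (j : ℝ) ^ (-γ)) →
      (∀ j : ℕ, (J < j ∨ j = 0) → p j = 0) →
      (J : ℝ) ≤ A * (n : ℝ) ^ (1 / γ) →
      δ ≤ ∑ j ∈ Finset.Icc 1 J, (j : ℝ) * p j →
      (∑ j ∈ Finset.Icc 1 J, (j : ℝ) * ((j : ℝ) - 2) * p j ≤
        -a * ∑ j ∈ Finset.Icc 1 J, (j : ℝ) * p j) →
      (t : ℝ) ≤ (n : ℝ) ^ α →
      (n : ℝ) * ∑ j ∈ Finset.Icc 1 J, (j : ℝ) * ((j : ℝ) - 2) * p j *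
          (1 - 2 * (t : ℝ) / ((n : ℝ) * ∑ j ∈ Finset.Icc 1 J, (j : ℝ) * p j)) ^
            ((j : ℝ) / 2) ≤
        (n : ℝ) * ∑ j ∈ Finset.Icc 1 J, (j : ℝ) * ((j : ℝ) - 2) * p j +
          C * (n : ℝ) ^ (α + 1 / γ) * (Real.log n + 1) := by
  have hγinv : 0 ≤ 1 / γ := by positivity
  obtain ⟨N, hN⟩ := eventually_atTop.1
    ((eventually_two_mul_rpow_le_mul (α := α) (by linarith) hδ).and (eventually_ge_atTop 1))
  refine ⟨2, two_pos, N, fun n hn J p t hp _ _ _ hd _ ht => ?_⟩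
  obtain ⟨hsmall, hn₁⟩ := hN n hn
  set d := ∑ j ∈ Finset.Icc 1 J, (j : ℝ) * p j
  have hnd : 0 < (n : ℝ) * d := mul_pos (by exact_mod_cast hn₁) (hδ.trans_le hd)
  have hratio : 2 * (t : ℝ) / (n * d) ≤ 1 := by
    rw [div_le_one hnd]
    nlinarith [mul_le_mul_of_nonneg_left hd (Nat.cast_nonneg n)]
  have hdecay := sum_mul_sub_two_mul_rpow_half_le (Finset.Icc 1 J) hp (sub_nonneg.2 hratio)
    (sub_le_self _ (by positivity))
  have herror : (n : ℝ) * ((1 - (1 - 2 * t / (n * d))) * d) = 2 * t := by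
    rw [sub_sub_cancel, div_mul_eq_mul_div, mul_div_assoc', div_eq_iff hnd.ne']
    ring
  nlinarith [rpow_le_rpow_add_mul_log_add_one hn₁ (α := α) hγinv]

theorem drift_sum_estimate (c γ A δ a α : ℝ) (hc : 0 < c) (hγ : 3 < γ)
    (hA : 0 < A) (hδ : 0 < δ) (ha : 0 < a) (hα : 0 ≤ α) (hα' : α < 1 - 1 / γ) :
    ∃ C > 0, ∃ N : ℕ, ∀ n : ℕ, N ≤ n → ∀ (J : ℕ) (p : ℕ → ℝ) (t : ℕ),
      (∀ j, 0 ≤ p j) →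
      (∀ j : ℕ, 1 ≤ j → j ≤ J → p j ≤ c * (j : ℝ) ^ (-γ)) →
      (∀ j : ℕ, (J < j ∨ j = 0) → p j = 0) →
      (J : ℝ) ≤ A * (n : ℝ) ^ (1 / γ) →
      δ ≤ ∑ j ∈ Finset.Icc 1 J, (j : ℝ) * p j →
      (∑ j ∈ Finset.Icc 1 J, (j : ℝ) * ((j : ℝ) - 2) * p j ≤
        -a * ∑ j ∈ Finset.Icc 1 J, (j : ℝ) * p j) →
      (t : ℝ) ≤ (n : ℝ) ^ α →
      (n : ℝ) * ∑ j ∈ Finset.Icc 1 J, (j : ℝ) * ((j : ℝ) - 2) * p j *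
          (1 - 2 * (t : ℝ) / ((n : ℝ) * ∑ j ∈ Finset.Icc 1 J, (j : ℝ) * p j)) ^
            ((j : ℝ) / 2) ≤
        (n : ℝ) * ∑ j ∈ Finset.Icc 1 J, (j : ℝ) * ((j : ℝ) - 2) * p j +
          C * (n : ℝ) ^ (α + 1 / γ) * (Real.log n + 1) :=
  drift_sum_estimate_general c γ A δ a α hγ hδ hα'
end
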